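/- arXiv:1905.07737 — 6 statements merged into one kernel-verified Lean document; each statement's English description precedes it below -/
import Mathlib

section
/- Let Σ be an alphabet, k ≥ 1, δ₁,…,δ_k ∈ Σ with δ_i ≠ δ_{i+1} for all 1 ≤ i < k, and m₁,…,m_k ≥ 1. Set w = δ₁^{m₁}δ₂^{m₂}⋯δ_k^{m_k} and define ŵ = (δ₁^{m₁−1}δ₂^{m₂}δ₁)(δ₂^{m₂−1}δ₃^{m₃}δ₂)⋯(δ_{k−1}^{m_{k−1}−1}δ_k^{m_k}δ_{k−1})(δ_k^{m_k−1}). Then w is NOT a (not necessarily contiguous) subsequence of ŵ. -/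
private lemma flatMap_map' {β : Type*} (f : ℕ → List β) (l : List ℕ) (g : ℕ → ℕ) :
    (l.map g).flatMap f = l.flatMap (fun i => f (g i)) := by
  induction l with
  | nil => rfl
  | cons a t ih => simp [List.flatMap_cons, ih]

private lemma flatMap_range_succ' {β : Type*} (f : ℕ → List β) (n : ℕ) :
    (List.range (n + 1)).flatMap f = f 0 ++ (List.range n).flatMap (fun i => f (i + 1)) := by
  rw [List.range_succ_eq_map, List.flatMap_cons, flatMap_map']

private lemma key_lemma {α : Type*} {a b : α} (hab : a ≠ b) {n p : ℕ} (hn : 1 ≤ n) :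
    ¬ (List.replicate n a ++ [b]).Sublist
      (List.replicate (n - 1) a ++ (List.replicate p b ++ [a])) := by
  classical
  intro h
  rw [← List.append_assoc, List.sublist_append_iff] at h
  obtain ⟨l₁, l₂, heq, h₁, h₂⟩ := h
  rcases List.sublist_singleton.mp h₂ with rfl | rfl
  · rw [List.append_nil] at heq
    subst heq
    have := h₁.count_le a
    simp [List.count_replicate, List.count_append, hab, Ne.symm hab,
      List.count_singleton] at this
    omega
  · have := congrArg List.getLast? heq
    simp [List.getLast?_append] at this
    exact hab this.symm

private lemma main_lemma {α : Type*} (k : ℕ) (hk : 1 ≤ k) : ∀ (δ : ℕ → α) (m : ℕ → ℕ),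
    (∀ i < k, 1 ≤ m i) → (∀ i, i + 1 < k → δ i ≠ δ (i + 1)) →
    ¬ ((List.range k).flatMap fun i => List.replicate (m i) (δ i)).Sublist
      (((List.range (k - 1)).flatMap fun i =>
          List.replicate (m i - 1) (δ i) ++ List.replicate (m (i + 1)) (δ (i + 1)) ++ [δ i]) ++
        List.replicate (m (k - 1) - 1) (δ (k - 1))) := by
  induction k, hk using Nat.le_induction with
  | base =>
    intro δ m hm hδ h
    have h1 := h.length_le
    have h2 := hm 0 one_pos
    have e : List.range 1 = [0] := rfl
    rw [e] at h1
    simp at h1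
    omega
  | succ k hk ih =>
    obtain ⟨j, rfl⟩ : ∃ j, k = j + 1 := ⟨k - 1, by omega⟩
    intro δ m hm hδ h
    have hm0 : 1 ≤ m 0 := hm 0 (by omega)
    have hm1 : 1 ≤ m 1 := hm 1 (by omega)
    have hab : δ 0 ≠ δ 1 := hδ 0 (by omega)
    have hIH := ih (fun i => δ (i + 1)) (fun i => m (i + 1))
      (fun i hi => hm (i + 1) (by omega)) (fun i hi => hδ (i + 1) (by omega))
    simp only [Nat.add_sub_cancel] at hIH h
    -- names for the shifted words
    set W' : List α := ((List.range (j + 1)).flatMap fun i =>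
      List.replicate (m (i + 1)) (δ (i + 1))) with hW'
    set Wh : List α := (((List.range j).flatMap fun i =>
        List.replicate (m (i + 1) - 1) (δ (i + 1)) ++
          List.replicate (m (i + 1 + 1)) (δ (i + 1 + 1)) ++ [δ (i + 1)]) ++
      List.replicate (m (j + 1) - 1) (δ (j + 1))) with hWh
    have hsplit : ((List.range (j + 1 + 1)).flatMap fun i => List.replicate (m i) (δ i))
        = List.replicate (m 0) (δ 0) ++ W' := by
      rw [flatMap_range_succ']
    have htgt : (((List.range (j + 1)).flatMap fun i =>
          List.replicate (m i - 1) (δ i) ++ List.replicate (m (i + 1)) (δ (i + 1)) ++ [δ i]) ++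
        List.replicate (m (j + 1) - 1) (δ (j + 1)))
        = (List.replicate (m 0 - 1) (δ 0) ++ (List.replicate (m 1) (δ 1) ++ [δ 0])) ++ Wh := by
      rw [flatMap_range_succ', hWh]
      simp [List.append_assoc]
    rw [hsplit, htgt, List.sublist_append_iff] at h
    obtain ⟨u, v, huv, hu, hv⟩ := h
    by_cases hlen : u.length ≤ m 0
    · have hvv : List.drop u.length (List.replicate (m 0) (δ 0)) ++ W' = v := by
        have := congrArg (List.drop u.length) huv
        rwa [List.drop_append_of_le_length (by simpa using hlen), List.drop_left] at this
      exact hIH ((hvv ▸ List.sublist_append_right _ W').trans hv)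
    · have hWsplit : W' = δ 1 :: (List.replicate (m 1 - 1) (δ 1) ++
          ((List.range j).flatMap fun i => List.replicate (m (i + 1 + 1)) (δ (i + 1 + 1)))) := by
        rw [hW', flatMap_range_succ']
        conv_lhs => rw [show m 1 = (m 1 - 1) + 1 by omega, List.replicate_succ]
        simp
      have hpre : (List.replicate (m 0) (δ 0) ++ [δ 1]) <+:
          (List.replicate (m 0) (δ 0) ++ W') := by
        refine ⟨List.replicate (m 1 - 1) (δ 1) ++
          ((List.range j).flatMap fun i => List.replicate (m (i + 1 + 1)) (δ (i + 1 + 1))), ?_⟩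
        rw [hWsplit]
        simp
      have hpu : (List.replicate (m 0) (δ 0) ++ [δ 1]) <+: u :=
        List.prefix_of_prefix_length_le (huv ▸ hpre) (List.prefix_append u v)
          (by simp; omega)
      exact key_lemma hab hm0 (hpu.sublist.trans hu)

/-- The word `w = δ₁^{m₁}⋯δ_k^{m_k}` is not a subsequence of the word
`ŵ = (δ₁^{m₁−1}δ₂^{m₂}δ₁)⋯(δ_{k−1}^{m_{k−1}−1}δ_k^{m_k}δ_{k−1})(δ_k^{m_k−1})`. -/
theorem stmt0 {α : Type*} (k : ℕ) (hk : 1 ≤ k) (δ : ℕ → α) (m : ℕ → ℕ)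
    (hm : ∀ i < k, 1 ≤ m i)
    (hδ : ∀ i, i + 1 < k → δ i ≠ δ (i + 1)) :
    ¬ ((List.range k).flatMap fun i => List.replicate (m i) (δ i)).Sublist
      (((List.range (k - 1)).flatMap fun i =>
          List.replicate (m i - 1) (δ i) ++ List.replicate (m (i + 1)) (δ (i + 1)) ++ [δ i]) ++
        List.replicate (m (k - 1) - 1) (δ (k - 1))) :=
  main_lemma k hk δ m hm hδ
end

section
/- Let Σ be an alphabet, k ≥ 1, δ₁,…,δ_k ∈ Σ with δ_i ≠ δ_{i+1} for all 1 ≤ i < k, and m₁,…,m_k ≥ 1. Set w = δ₁^{m₁}⋯δ_k^{m_k} and define ŵ = (δ₁^{m₁−1}δ₂^{m₂}δ₁)(δ₂^{m₂−1}δ₃^{m₃}δ₂)⋯(δ_{k−1}^{m_{k−1}−1}δ_k^{m_k}δ_{k−1})(δ_k^{m_k−1}). Then every word of the form δ₁^{n₁}δ₂^{n₂}⋯δ_k^{n_k} with 0 ≤ n_i ≤ m_i for all i and n_{i₀} < m_{i₀} for at least one i₀ is a subsequence of ŵ. -/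
private lemma flatMap_sublist_of {α β : Type*} (f g : α → List β) (l : List α)
    (h : ∀ a ∈ l, (f a).Sublist (g a)) : (l.flatMap f).Sublist (l.flatMap g) := by
  induction l with
  | nil => simp
  | cons a l ih =>
    simp only [List.flatMap_cons]
    exact (h a (by simp)).append (ih fun a ha => h a (by simp [ha]))

private lemma repl_into_block {α : Type*} (a : α) (X : List α) (n m' : ℕ) (h : n ≤ m' + 1) :
    (List.replicate n a).Sublist (List.replicate m' a ++ X ++ [a]) := by
  have h1 : (List.replicate n a).Sublist (List.replicate m' a ++ [a]) := by
    have he : List.replicate m' a ++ [a] = List.replicate (m' + 1) a := by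
      simp [List.replicate_add]
    rw [he]
    exact (List.replicate_sublist_replicate a).2 h
  refine h1.trans ?_
  rw [List.append_assoc]
  exact (List.Sublist.refl _).append (List.sublist_append_right X [a])

private lemma insert_mid {α : Type*} (A B R : List α) (c : α) :
    (B ++ R).Sublist ((A ++ B ++ [c]) ++ R) := by
  have h := (List.sublist_append_right A B).append (List.sublist_append_right [c] R)
  simpa [List.append_assoc] using h

private lemma auxC {α : Type*} (k : ℕ) (δ : ℕ → α) (m n : ℕ → ℕ)
    (hn : ∀ i < k, n i ≤ m i) :
    ∀ t j, j + (t + 1) = k →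
      ((List.range' j (t + 1)).flatMap fun i => List.replicate (n i) (δ i)).Sublist
        (List.replicate (m j) (δ j) ++
          ((List.range' j t).flatMap fun i =>
            List.replicate (m i - 1) (δ i) ++ List.replicate (m (i + 1)) (δ (i + 1)) ++ [δ i]) ++
          List.replicate (m (k - 1) - 1) (δ (k - 1))) := by
  intro t
  induction t with
  | zero =>
    intro j hj
    have hjk : j = k - 1 := by omega
    have hjlt : j < k := by omega
    subst hjk
    simp only [List.range'_succ, List.range'_zero, List.flatMap_cons, List.flatMap_nil,
      List.append_nil]
    refine ((List.replicate_sublist_replicate _).2 (hn _ hjlt)).trans ?_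
    exact List.sublist_append_left _ _
  | succ t ih =>
    intro j hj
    have hjlt : j < k := by omega
    rw [List.range'_succ (s := j) (n := t + 1) (step := 1), List.range'_succ (s := j) (n := t) (step := 1)]
    simp only [List.flatMap_cons]
    have step1 := ih (j + 1) (by omega)
    have step1' : ((List.range' (j + 1) (t + 1)).flatMap fun i =>
          List.replicate (n i) (δ i)).Sublist
        (List.replicate (m (j + 1)) (δ (j + 1)) ++
          (((List.range' (j + 1) t).flatMap fun i =>
            List.replicate (m i - 1) (δ i) ++ List.replicate (m (i + 1)) (δ (i + 1)) ++ [δ i]) ++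
          List.replicate (m (k - 1) - 1) (δ (k - 1)))) := by
      simpa [List.append_assoc] using step1
    have hmid := step1'.trans
      (insert_mid (List.replicate (m j - 1) (δ j)) (List.replicate (m (j + 1)) (δ (j + 1)))
        _ (δ j))
    have h1 : (List.replicate (n j) (δ j)).Sublist (List.replicate (m j) (δ j)) :=
      (List.replicate_sublist_replicate _).2 (hn _ hjlt)
    have := h1.append hmid
    simp only [List.append_assoc] at this ⊢
    exact this

/-- Every word `δ₁^{n₁}⋯δ_k^{n_k}` with `n_i ≤ m_i` and `n_{i₀} < m_{i₀}` for some `i₀`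
is a subsequence of `ŵ`. -/
theorem stmt1 {α : Type*} (k : ℕ) (hk : 1 ≤ k) (δ : ℕ → α) (m : ℕ → ℕ)
    (hm : ∀ i < k, 1 ≤ m i)
    (hδ : ∀ i, i + 1 < k → δ i ≠ δ (i + 1))
    (n : ℕ → ℕ) (hn : ∀ i < k, n i ≤ m i) (hlt : ∃ i₀ < k, n i₀ < m i₀) :
    ((List.range k).flatMap fun i => List.replicate (n i) (δ i)).Sublist
      (((List.range (k - 1)).flatMap fun i =>
          List.replicate (m i - 1) (δ i) ++ List.replicate (m (i + 1)) (δ (i + 1)) ++ [δ i]) ++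
        List.replicate (m (k - 1) - 1) (δ (k - 1))) := by
  obtain ⟨i₀, hi₀k, hi₀lt⟩ := hlt
  have hr1 : List.range k = List.range' 0 i₀ ++ List.range' i₀ (k - i₀) := by
    have h := List.range'_append (s := 0) (m := i₀) (n := k - i₀) (step := 1)
    simp only [Nat.one_mul, Nat.zero_add] at h
    rw [List.range_eq_range']
    rw [show i₀ + (k - i₀) = k from by omega] at h
    exact h.symm
  have hr2 : List.range (k - 1) = List.range' 0 i₀ ++ List.range' i₀ (k - 1 - i₀) := by
    have h := List.range'_append (s := 0) (m := i₀) (n := k - 1 - i₀) (step := 1)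
    simp only [Nat.one_mul, Nat.zero_add] at h
    rw [List.range_eq_range']
    rw [show i₀ + (k - 1 - i₀) = k - 1 from by omega] at h
    exact h.symm
  rw [hr1, hr2, List.flatMap_append, List.flatMap_append, List.append_assoc]
  refine List.Sublist.append ?_ ?_
  · refine flatMap_sublist_of _ _ _ ?_
    intro i hi
    have hik : i < k := by
      simp only [List.mem_range'_1, Nat.zero_add] at hi
      omega
    exact repl_into_block _ _ _ _ (by have := hn i hik; have := hm i hik; omega)
  · rcases Nat.lt_or_ge (i₀ + 1) k with h | h
    · have ht : k - i₀ = (k - i₀ - 2) + 1 + 1 := by omega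
      have ht2 : k - 1 - i₀ = (k - i₀ - 2) + 1 := by omega
      rw [ht, ht2, List.range'_succ (s := i₀) (n := k - i₀ - 2 + 1) (step := 1), List.range'_succ (s := i₀) (n := k - i₀ - 2) (step := 1),
        List.flatMap_cons, List.flatMap_cons]
      have key := auxC k δ m n hn (k - i₀ - 2) (i₀ + 1) (by omega)
      have key' : ((List.range' (i₀ + 1) (k - i₀ - 2 + 1)).flatMap fun i =>
            List.replicate (n i) (δ i)).Sublist
          (List.replicate (m (i₀ + 1)) (δ (i₀ + 1)) ++
            (((List.range' (i₀ + 1) (k - i₀ - 2)).flatMap fun i =>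
              List.replicate (m i - 1) (δ i) ++ List.replicate (m (i + 1)) (δ (i + 1)) ++ [δ i]) ++
            List.replicate (m (k - 1) - 1) (δ (k - 1)))) := by
        simpa [List.append_assoc] using key
      have h2 := key'.trans
        ((List.Sublist.refl (List.replicate (m (i₀ + 1)) (δ (i₀ + 1)))).append
          (List.sublist_append_right [δ i₀] _))
      have h1 : (List.replicate (n i₀) (δ i₀)).Sublist (List.replicate (m i₀ - 1) (δ i₀)) :=
        (List.replicate_sublist_replicate _).2 (by omega)
      have hfin := h1.append h2
      simp only [List.append_assoc] at hfin ⊢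
      exact hfin
    · have hi : i₀ = k - 1 := by omega
      have ht : k - i₀ = 1 := by omega
      have ht2 : k - 1 - i₀ = 0 := by omega
      rw [ht, ht2]
      simp only [List.range'_succ, List.range'_zero, List.flatMap_cons, List.flatMap_nil,
        List.append_nil, List.nil_append]
      subst hi
      exact (List.replicate_sublist_replicate _).2 (by omega)
end

section
/- Let Σ be an alphabet, c ∈ Σ⁺ a nonempty word, and a ∈ Σ a letter with a ≠ c[1] and a ≠ c[|c|] (the first and last letters of c). Define c̃ = c[1..|c|−1] · a · c[2..|c|] if |c| ≥ 2, and c̃ = a if |c| = 1. Then c is not a factor (contiguous substring) of c̃. -/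
/-- `c` is not a factor of `c̃ = c[1..|c|−1]·a·c[2..|c|]` (or `c̃ = a` when `|c| = 1`). -/
theorem stmt3 {α : Type*} (c : List α) (hc : c ≠ []) (a : α)
    (ha1 : a ≠ c.head hc) (ha2 : a ≠ c.getLast hc) :
    ¬ c <:+: (if 2 ≤ c.length then c.dropLast ++ [a] ++ c.tail else [a]) := by
  intro h
  obtain ⟨s, t, hst⟩ := h
  have hcpos : 0 < c.length := List.length_pos_iff.mpr hc
  by_cases h2 : 2 ≤ c.length
  · rw [if_pos h2] at hst
    set n := c.length with hn
    set i := s.length with hi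
    have hlen : i + n + t.length = (n - 1) + 1 + (n - 1) := by
      have h' := congrArg List.length hst
      simp [List.length_append, List.length_dropLast, List.length_tail] at h'
      omega
    have hile : i ≤ n - 1 := by omega
    -- the occurrence: c[j]? = d[i+j]? where d is the big word
    have hocc : ∀ j, j < n → getElem? c j = getElem? (c.dropLast ++ [a] ++ c.tail) (i + j) := by
      intro j hj
      rw [← hst, List.append_assoc,
        List.getElem?_append_right (l₁ := s) (by omega),
        show i + j - s.length = j by omega,
        List.getElem?_append_left (by omega)]
    -- value of the big word at indices
    have hdlt : ∀ m, m < n - 1 → getElem? (c.dropLast ++ [a] ++ c.tail) m = getElem? c m := by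
      intro m hm
      rw [List.getElem?_append_left (by simp [List.length_dropLast]; omega),
        List.getElem?_append_left (by simp [List.length_dropLast]; omega),
        List.getElem?_eq_getElem (by simp [List.length_dropLast]; omega),
        List.getElem_dropLast, ← List.getElem?_eq_getElem]
    have hdeq : getElem? (c.dropLast ++ [a] ++ c.tail) (n - 1) = some a := by
      rw [List.getElem?_append_left
          (by simp only [List.length_append, List.length_dropLast, List.length_singleton]; omega),
        List.getElem?_append_right (by simp only [List.length_dropLast]; omega),
        show n - 1 - c.dropLast.length = 0 by simp only [List.length_dropLast]; omega]
      rfl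
    have hdgt : ∀ m, n - 1 < m →
        getElem? (c.dropLast ++ [a] ++ c.tail) m = getElem? c (m - (n - 1)) := by
      intro m hm
      rw [List.getElem?_append_right (by simp [List.length_dropLast]; omega),
        List.getElem?_tail,
        show m - (c.dropLast ++ [a]).length + 1 = m - (n - 1) by
          simp [List.length_dropLast]; omega]
    set k := n - 1 - i with hk
    have hck : getElem? c k = some a := by
      rw [hocc k (by omega), show i + k = n - 1 by omega, hdeq]
    by_cases hi0 : i = 0
    · -- k = n - 1 : contradicts the last letter
      have hlast : c.getLast hc = a := by
        rw [show k = n - 1 by omega, List.getElem?_eq_getElem (by omega)] at hck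
        rw [List.getLast_eq_getElem]
        exact Option.some.inj hck
      exact ha2 hlast.symm
    · have hkn : k < n - 1 := by omega
      -- the shifting fact
      have factB : ∀ j, j < n - 1 → j ≠ k → getElem? c j = getElem? c ((j + i) % (n - 1)) := by
        intro j hj hjk
        rw [hocc j (by omega)]
        rcases lt_trichotomy (i + j) (n - 1) with h' | h' | h'
        · rw [hdlt _ h', show (j + i) % (n - 1) = j + i from Nat.mod_eq_of_lt (by omega),
            Nat.add_comm]
        · exact absurd (by omega : j = k) hjk
        · rw [hdgt _ h',
            show (j + i) % (n - 1) = i + j - (n - 1) by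
              rw [Nat.mod_eq_sub_mod (by omega)]
              rw [Nat.mod_eq_of_lt (by omega)]
              congr 1
              omega]
      -- the chain: every index m*k mod (n-1) carries the letter a
      have chain : ∀ m, 1 ≤ m → getElem? c ((m * k) % (n - 1)) = some a := by
        intro m hm
        induction m with
        | zero => omega
        | succ m ih =>
          rcases Nat.eq_zero_or_pos m with hm0 | hm0
          · subst hm0
            rw [show (0 + 1) * k = k by ring, Nat.mod_eq_of_lt (by omega)]
            exact hck
          · have ih := ih hm0
            set j := ((m + 1) * k) % (n - 1) with hj
            have hjlt : j < n - 1 := Nat.mod_lt _ (by omega)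
            by_cases hjk : j = k
            · rwa [hjk]
            · rw [factB j hjlt hjk]
              have heq : (j + i) % (n - 1) = (m * k) % (n - 1) := by
                rw [hj, Nat.mod_add_mod,
                  show (m + 1) * k + i = m * k + (n - 1) by
                    have : k + i = n - 1 := by omega
                    ring_nf
                    omega,
                  Nat.add_mod_right]
              rw [heq, ih]
      have h0 : getElem? c 0 = some a := by
        have h' := chain (n - 1) (by omega)
        rwa [Nat.mul_mod_right] at h'
      have hhead : c.head hc = a := by
        rw [List.getElem?_eq_getElem (by omega)] at h0
        rw [List.head_eq_getElem]
        exact Option.some.inj h0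
      exact ha1 hhead.symm
  · rw [if_neg h2] at hst
    have hn1 : c.length = 1 := by omega
    have hlen := congrArg List.length hst
    simp only [List.length_append, List.length_singleton] at hlen
    have hs : s = [] := by rw [← List.length_eq_zero_iff]; omega
    have ht : t = [] := by rw [← List.length_eq_zero_iff]; omega
    subst hs; subst ht
    simp only [List.nil_append, List.append_nil] at hst
    subst hst
    exact ha1 rfl
end

section
/- Let Σ be an alphabet, c ∈ Σ⁺, δ ∈ Σ, and m ≥ |c| such that c is not a factor of δ^m. Let a ∈ Σ with a ≠ c[1] and a ≠ c[|c|], and define c̃ = c[1..|c|−1] · a · c[2..|c|] if |c| ≥ 2 and c̃ = a if |c| = 1. Then c is not a factor of δ^m · c̃ · δ^m. -/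
private lemma descent {β : Type*} (f : ℕ → β) (p q : ℕ) (hp : 1 ≤ p) (hq : 1 ≤ q)
    (A : ∀ i, i + 1 ≤ q → f i = f (i + p))
    (B : ∀ i, 1 ≤ i → i ≤ p → f i = f (i + q)) :
    f q = f 0 := by
  have C1 : ∀ x, x ≤ p + q - 1 → f x = f (x % p) := by
    intro x
    induction x using Nat.strong_induction_on with
    | _ x ih =>
      intro hx
      rcases lt_or_ge x p with h | h
      · rw [Nat.mod_eq_of_lt h]
      · have hA := A (x - p) (by omega)
        rw [Nat.sub_add_cancel h] at hA
        rw [← hA, ih (x - p) (by omega) (by omega)]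
        congr 1
        conv_rhs => rw [show x = (x - p) + p by omega]
        rw [Nat.add_mod_right]
  have C2 : ∀ k, f q = f ((k + 1) * q % p) := by
    intro k
    induction k with
    | zero => simpa using C1 q (by omega)
    | succ k ih =>
      have hkey : ((k + 1) * q % p + q) % p = ((k + 1 + 1) * q) % p := by
        rw [Nat.mod_add_mod]; congr 1; ring
      rcases Nat.eq_zero_or_pos ((k + 1) * q % p) with h0 | h0
      · rw [h0] at hkey
        rw [← hkey]
        simpa using C1 q (by omega)
      · have hrlt : (k + 1) * q % p < p := Nat.mod_lt _ (by omega)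
        rw [ih, B _ h0 (by omega), C1 _ (by omega), hkey]
  have := C2 (p - 1)
  rw [show (p - 1 + 1) = p by omega, Nat.mul_mod_right] at this
  exact this

private lemma replLeft {β : Type*} (f : ℕ → β) (n j : ℕ) (d : β) (hj : 1 ≤ j)
    (h1 : ∀ i, i < n → i < j → f i = d) (h2 : ∀ i, j ≤ i → i < n → f i = f (i - j)) :
    ∀ i, i < n → f i = d := by
  intro i
  induction i using Nat.strong_induction_on with
  | _ i ih =>
    intro hi
    rcases lt_or_ge i j with h | h
    · exact h1 i hi h
    · rw [h2 i h hi]; exact ih (i - j) (by omega) (by omega)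

private lemma replRight {β : Type*} (f : ℕ → β) (n e : ℕ) (d : β) (he : 1 ≤ e)
    (h1 : ∀ i, n ≤ i + e → i < n → f i = d) (h2 : ∀ i, i < n → i + e < n → f i = f (i + e)) :
    ∀ i, i < n → f i = d := by
  have key : ∀ k i, i < n → n ≤ i + k → f i = d := by
    intro k
    induction k with
    | zero => intro i hin hk; omega
    | succ k ih =>
      intro i hin hk
      rcases le_or_gt n (i + e) with h | h
      · exact h1 i h hin
      · rw [h2 i hin h]; exact ih (i + e) (by omega) (by omega)
  intro i hi; exact key n i hi (by omega)

/-- If `c` is not a factor of `δ^m` with `m ≥ |c|`, then `c` is not a factor of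
`δ^m · c̃ · δ^m`. -/
theorem stmt4 {α : Type*} (c : List α) (hc : c ≠ []) (δ : α) (m : ℕ)
    (hm : c.length ≤ m)
    (hfac : ¬ c <:+: List.replicate m δ)
    (a : α) (ha1 : a ≠ c.head hc) (ha2 : a ≠ c.getLast hc) :
    ¬ c <:+: (List.replicate m δ ++
        (if 2 ≤ c.length then c.dropLast ++ [a] ++ c.tail else [a]) ++
        List.replicate m δ) := by
  intro hinf
  have hn1 : 1 ≤ c.length := List.length_pos_iff.mpr hc
  have hnotrep : c ≠ List.replicate c.length δ := by
    intro h
    apply hfac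
    refine h ▸ ⟨[], List.replicate (m - c.length) δ, ?_⟩
    simp only [List.nil_append, ← List.replicate_add]
    congr 1
    omega
  have hreach : (∀ i, i < c.length → getElem? c i = some δ) → False := by
    intro hall
    apply hnotrep
    apply List.ext_getElem?
    intro i
    rw [List.getElem?_replicate]
    split
    · exact hall i ‹_›
    · exact List.getElem?_eq_none (by omega)
  have hhead : getElem? c 0 = some (c.head hc) := by
    rw [List.head_eq_getElem, List.getElem?_eq_getElem]
  have hlast : getElem? c (c.length - 1) = some (c.getLast hc) := by
    rw [List.getLast_eq_getElem, List.getElem?_eq_getElem]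
  have hlenR : (List.replicate m δ).length = m := List.length_replicate
  rcases le_or_gt 2 c.length with hn2 | hn2
  · rw [if_pos hn2] at hinf
    obtain ⟨x, y, hxy⟩ := hinf
    have hlen4 : c.dropLast.length = c.length - 1 := List.length_dropLast
    have hlen5 : (c.dropLast ++ [a]).length = c.length := by
      simp only [List.length_append, List.length_dropLast, List.length_cons,
        List.length_nil]
      omega
    have hlen1 : (c.dropLast ++ [a] ++ c.tail).length = 2 * c.length - 1 := by
      simp only [List.length_append, List.length_dropLast, List.length_cons,
        List.length_nil, List.length_tail]
      omega
    have hlen2 : (List.replicate m δ ++ (c.dropLast ++ [a] ++ c.tail)).length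
        = m + (2 * c.length - 1) := by
      rw [List.length_append, hlenR, hlen1]
    have hlenT : c.tail.length = c.length - 1 := List.length_tail
    have hlenA : ([a] : List α).length = 1 := rfl
    have hlen : x.length + c.length + y.length = 2 * m + (2 * c.length - 1) := by
      have h := congrArg List.length hxy
      simp only [List.length_append] at h
      omega
    have hval : ∀ i, i < c.length → getElem? c i = getElem? (List.replicate m δ ++
        (c.dropLast ++ [a] ++ c.tail) ++ List.replicate m δ) (x.length + i) := by
      intro i hi
      have hxc : (x ++ c).length = x.length + c.length := List.length_append
      rw [← hxy, List.getElem?_append_left (by omega),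
        List.getElem?_append_right (by omega),
        show x.length + i - x.length = i by omega]
    -- values of the middle word
    have huL : ∀ t, t < c.length - 1 →
        getElem? (c.dropLast ++ [a] ++ c.tail) t = getElem? c t := by
      intro t ht
      rw [List.getElem?_append_left (by omega),
        List.getElem?_append_left (by omega),
        List.getElem?_dropLast, if_pos ht]
    have huA : getElem? (c.dropLast ++ [a] ++ c.tail) (c.length - 1) = some a := by
      rw [List.getElem?_append_left (by omega),
        List.getElem?_append_right (by omega),
        show c.length - 1 - c.dropLast.length = 0 by omega]
      rfl
    have huR : ∀ t, c.length - 1 < t → t < 2 * c.length - 1 →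
        getElem? (c.dropLast ++ [a] ++ c.tail) t = getElem? c (t - (c.length - 1)) := by
      intro t h1t h2t
      rw [List.getElem?_append_right (by omega), List.getElem?_tail]
      congr 1
      omega
    -- pointwise facts about c via position in the big word
    have hvδL : ∀ i, i < c.length → x.length + i < m → getElem? c i = some δ := by
      intro i hi hj
      rw [hval i hi, List.getElem?_append_left (by omega),
        List.getElem?_append_left (by omega),
        List.getElem?_replicate, if_pos (by omega)]
    have hvu : ∀ i, i < c.length → m ≤ x.length + i →
        x.length + i < m + (2 * c.length - 1) →
        getElem? c i = getElem? (c.dropLast ++ [a] ++ c.tail) (x.length + i - m) := by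
      intro i hi h1i h2i
      rw [hval i hi, List.getElem?_append_left (by omega),
        List.getElem?_append_right (by omega), hlenR]
    have hvδR : ∀ i, i < c.length → m + (2 * c.length - 1) ≤ x.length + i →
        getElem? c i = some δ := by
      intro i hi h1i
      rw [hval i hi, List.getElem?_append_right (by omega),
        List.getElem?_replicate, if_pos (by omega)]
    -- case analysis on the position
    rcases lt_or_ge x.length m with hcase | hcase
    · -- occurrence starts before the middle block
      apply hreach
      apply replLeft (fun i => getElem? c i) c.length (m - x.length) (some δ) (by omega)
      · intro i hi hij
        exact hvδL i hi (by omega)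
      · intro i hij hi
        rw [hvu i hi (by omega) (by omega), huL (x.length + i - m) (by omega)]
        congr 1
        omega
    · rcases eq_or_lt_of_le hcase with heq | hcase2
      · -- x.length = m : last letter of c is a
        have h := hvu (c.length - 1) (by omega) (by omega) (by omega)
        rw [show x.length + (c.length - 1) - m = c.length - 1 by omega, huA, hlast] at h
        exact ha2 (Option.some.inj h).symm
      · rcases lt_or_ge x.length (m + c.length - 1) with hcase3 | hcase3
        · -- middle case : use the periodicity descent
          have hq : getElem? c ((c.length - 1) - (x.length - m)) = some a := by
            have h := hvu ((c.length - 1) - (x.length - m)) (by omega) (by omega) (by omega)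
            rw [show x.length + ((c.length - 1) - (x.length - m)) - m = c.length - 1
              by omega, huA] at h
            exact h
          have hA : ∀ i, i + 1 ≤ (c.length - 1) - (x.length - m) →
              getElem? c i = getElem? c (i + (x.length - m)) := by
            intro i hi
            rw [hvu i (by omega) (by omega) (by omega),
              huL (x.length + i - m) (by omega)]
            congr 1
            omega
          have hB : ∀ i, 1 ≤ i → i ≤ x.length - m →
              getElem? c i = getElem? c (i + ((c.length - 1) - (x.length - m))) := by
            intro i h1i h2i
            have h := hvu (i + ((c.length - 1) - (x.length - m)))
              (by omega) (by omega) (by omega)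
            rw [huR (x.length + (i + ((c.length - 1) - (x.length - m))) - m)
              (by omega) (by omega),
              show x.length + (i + ((c.length - 1) - (x.length - m))) - m -
                (c.length - 1) = i by omega] at h
            exact h.symm
          have hd := descent (fun i => getElem? c i) (x.length - m)
            ((c.length - 1) - (x.length - m)) (by omega) (by omega) hA hB
          rw [hq, hhead] at hd
          exact ha1 (Option.some.inj hd)
        · rcases eq_or_lt_of_le hcase3 with heq3 | hcase4
          · -- x.length = m + c.length - 1 : first letter of c is a
            have h := hvu 0 (by omega) (by omega) (by omega)
            rw [show x.length + 0 - m = c.length - 1 by omega, huA, hhead] at h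
            exact ha1 (Option.some.inj h).symm
          · -- occurrence starts after the middle block
            apply hreach
            apply replRight (fun i => getElem? c i) c.length
              (x.length - m - (c.length - 1)) (some δ) (by omega)
            · intro i h1i hi
              exact hvδR i hi (by omega)
            · intro i hi hie
              rw [hvu i hi (by omega) (by omega),
                huR (x.length + i - m) (by omega) (by omega)]
              congr 1
              omega
  · -- c has length 1
    have hN : c.length = 1 := by omega
    rw [if_neg (by omega)] at hinf
    obtain ⟨x, y, hxy⟩ := hinf
    have hlen6 : (List.replicate m δ ++ [a]).length = m + 1 := by
      rw [List.length_append, hlenR]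
      rfl
    have hlen : x.length + c.length + y.length = 2 * m + 1 := by
      have h := congrArg List.length hxy
      simp only [List.length_append] at h
      rw [hlenR] at h
      simp only [List.length_cons, List.length_nil] at h
      omega
    have hval : getElem? c 0 = getElem? (List.replicate m δ ++ [a] ++
        List.replicate m δ) x.length := by
      have hxc : (x ++ c).length = x.length + c.length := List.length_append
      rw [← hxy, List.getElem?_append_left (by omega),
        List.getElem?_append_right (by omega),
        show x.length - x.length = 0 by omega]
    rcases lt_or_ge x.length m with hcase | hcase
    · apply hreach
      intro i hi
      have hi0 : i = 0 := by omega
      subst hi0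
      rw [hval, List.getElem?_append_left (by omega),
        List.getElem?_append_left (by omega),
        List.getElem?_replicate, if_pos (by omega)]
    · rcases eq_or_lt_of_le hcase with heq | hcase2
      · rw [List.getElem?_append_left (by omega),
          List.getElem?_append_right (by omega),
          show x.length - (List.replicate m δ).length = 0 by omega] at hval
        rw [hhead] at hval
        exact ha1 (Option.some.inj hval.symm)
      · apply hreach
        intro i hi
        have hi0 : i = 0 := by omega
        subst hi0
        rw [hval, List.getElem?_append_right (by omega),
          List.getElem?_replicate, if_pos (by omega)]
end

section
/- Let Σ be an alphabet with |Σ| ≥ 3, c ∈ Σ⁺ a nonempty word, and π a regular pattern (a pattern in which every variable occurs at most once) such that c ∈ L(π) but c is not a factor of π (viewing π as a string over X ∪ Σ). Let a ∈ Σ with a ≠ c[1] and a ≠ c[|c|], and define c̃ = c[1..|c|−1] · a · c[2..|c|] if |c| ≥ 2 and c̃ = a if |c| = 1. Then c̃ ∈ L(π). -/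
instance stmt13_lawfulBEq {X β : Type*} [DecidableEq X] [DecidableEq β] :
    LawfulBEq (X ⊕ β) where
  eq_of_beq {a b} h := by
    rcases a with a | a <;> rcases b with b | b
    · have h' : (a == b) = true := h
      rw [eq_of_beq h']
    · exact Bool.noConfusion (show false = true from h)
    · exact Bool.noConfusion (show false = true from h)
    · have h' : (a == b) = true := h
      rw [eq_of_beq h']
  rfl {a} := by
    rcases a with a | a
    · show (a == a) = true
      exact beq_self_eq_true a
    · show (a == a) = true
      exact beq_self_eq_true a

theorem stmt13_congr {X α : Type*} [DecidableEq X] (s : X → List α) (x : X) (w : List α)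
    (u : List (X ⊕ α)) (hu : Sum.inl x ∉ u) :
    u.flatMap (Sum.elim (Function.update s x w) fun b => [b]) =
      u.flatMap (Sum.elim s fun b => [b]) := by
  refine List.flatMap_congr fun y hy => ?_
  cases y with
  | inl x' =>
    have hne : x' ≠ x := fun h => hu (h ▸ hy)
    simp [Function.update_of_ne hne]
  | inr b => rfl

theorem stmt13_mapinr {X α : Type*} (s : X → List α) (c : List α) :
    ((c.map Sum.inr : List (X ⊕ α)).flatMap (Sum.elim s fun b => [b])) = c := by
  induction c with
  | nil => rfl
  | cons b c ih => simpa using ih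

/-- If every variable maps to `[]`, either the image is a "factor" of `π`, or some
variable has nonempty images on both sides. -/
theorem stmt13_B {X α : Type*} (s : X → List α) :
    ∀ π : List (X ⊕ α), (∀ x : X, Sum.inl x ∈ π → s x = []) →
    (∃ l1 l2 : List (X ⊕ α),
        π = l1 ++ (π.flatMap (Sum.elim s fun b => [b])).map Sum.inr ++ l2) ∨
    (∃ u v : List (X ⊕ α), ∃ x : X, π = u ++ [Sum.inl x] ++ v ∧
        u.flatMap (Sum.elim s fun b => [b]) ≠ [] ∧
        v.flatMap (Sum.elim s fun b => [b]) ≠ []) := by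
  intro π
  induction π with
  | nil => intro _; exact Or.inl ⟨[], [], rfl⟩
  | cons y ρ ih =>
    intro hall
    have hallρ : ∀ x : X, Sum.inl x ∈ ρ → s x = [] := fun x hx => hall x (List.mem_cons_of_mem _ hx)
    cases y with
    | inl x =>
      have hsx : s x = [] := hall x List.mem_cons_self
      have hπ : (Sum.inl x :: ρ).flatMap (Sum.elim s fun b => [b]) =
          ρ.flatMap (Sum.elim s fun b => [b]) := by simp [hsx]
      rcases ih hallρ with ⟨l1, l2, he⟩ | ⟨u, v, x', he, hu, hv⟩
      · refine Or.inl ⟨Sum.inl x :: l1, l2, ?_⟩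
        rw [hπ]
        conv_lhs => rw [he]
        simp
      · refine Or.inr ⟨Sum.inl x :: u, v, x', by simp [he], ?_, hv⟩
        simpa [hsx] using hu
    | inr b =>
      have hπ : (Sum.inr b :: ρ).flatMap (Sum.elim s fun b => [b]) =
          b :: ρ.flatMap (Sum.elim s fun b => [b]) := by simp
      rcases ih hallρ with ⟨l1, l2, he⟩ | ⟨u, v, x', he, hu, hv⟩
      · set c' := ρ.flatMap (Sum.elim s fun b => [b]) with hc'
        -- lengths: images of l1 and l2 are empty
        have himg : l1.flatMap (Sum.elim s fun b => [b]) ++ c' ++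
            l2.flatMap (Sum.elim s fun b => [b]) = c' := by
          conv_rhs => rw [hc', he]
          simp [List.flatMap_append, stmt13_mapinr]
        have hl1 : l1.flatMap (Sum.elim s fun b => [b]) = [] := by
          have := congrArg List.length himg
          simp only [List.length_append] at this
          exact List.eq_nil_of_length_eq_zero (by omega)
        cases hc'' : c' with
        | nil =>
          refine Or.inl ⟨[], ρ, ?_⟩
          simp [hπ, hc''] 
        | cons d c'' =>
          cases l1 with
          | nil =>
            refine Or.inl ⟨[], l2, ?_⟩
            rw [hπ]
            simp only [List.map_cons, List.nil_append]
            rw [he]; simp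
          | cons z l1' =>
            cases z with
            | inr b' => exfalso; simp at hl1
            | inl x' =>
              refine Or.inr ⟨[Sum.inr b], l1' ++ c'.map Sum.inr ++ l2, x', by simp [he], by simp, ?_⟩
              intro hcontr
              rw [List.flatMap_append, List.flatMap_append, stmt13_mapinr] at hcontr
              have := congrArg List.length hcontr
              simp [hc''] at this
      · exact Or.inr ⟨Sum.inr b :: u, v, x', by simp [he], by simp, hv⟩

/-- If `|Σ| ≥ 3`, `π` is a regular pattern, `c ∈ L(π)` and `c` is not a factor of `π`,
then `c̃ ∈ L(π)`, where `c̃ = c[1..|c|−1]·a·c[2..|c|]` (or `a` if `|c| = 1`) for a letter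
`a` differing from the first and last letters of `c`. -/
theorem stmt13 {X α : Type*} [DecidableEq X] [DecidableEq α]
    (hcard : ∃ x y z : α, x ≠ y ∧ x ≠ z ∧ y ≠ z)
    (π : List (X ⊕ α)) (hreg : ∀ x : X, π.count (Sum.inl x) ≤ 1)
    (c : List α) (hc : c ≠ [])
    (hcL : ∃ s : X → List α, π.flatMap (Sum.elim s fun b => [b]) = c)
    (hfac : ¬ (c.map Sum.inr : List (X ⊕ α)) <:+: π)
    (a : α) (ha1 : a ≠ c.head hc) (ha2 : a ≠ c.getLast hc) :
    ∃ s : X → List α, π.flatMap (Sum.elim s fun b => [b]) =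
      (if 2 ≤ c.length then c.dropLast ++ [a] ++ c.tail else [a]) := by
  obtain ⟨s, hs⟩ := hcL
  -- the target simplifies uniformly
  have hif : (if 2 ≤ c.length then c.dropLast ++ [a] ++ c.tail else [a]) =
      c.dropLast ++ [a] ++ c.tail := by
    split
    · rfl
    · next h =>
      have h1 : c.length = 1 := by
        have := List.length_pos_iff.mpr hc; omega
      obtain ⟨b, rfl⟩ := List.length_eq_one_iff.mp h1
      simp
  rw [hif]
  -- extract a decomposition
  have hdec : ∃ u v : List (X ⊕ α), ∃ x : X, π = u ++ [Sum.inl x] ++ v ∧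
      ((u.flatMap (Sum.elim s fun b => [b]) ≠ [] ∧
        v.flatMap (Sum.elim s fun b => [b]) ≠ []) ∨ s x ≠ []) := by
    rcases Classical.em (∃ x : X, Sum.inl x ∈ π ∧ s x ≠ []) with hA | hA
    · obtain ⟨x, hmem, hne⟩ := hA
      obtain ⟨u, v, rfl⟩ := List.append_of_mem hmem
      exact ⟨u, v, x, by simp, Or.inr hne⟩
    · have hA : ∀ x : X, Sum.inl x ∈ π → s x = [] := by
        intro x hx
        by_contra hne
        exact hA ⟨x, hx, hne⟩
      rcases stmt13_B s π hA with ⟨l1, l2, he⟩ | ⟨u, v, x, he, hu, hv⟩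
      · exact absurd ⟨l1, l2, by rw [← hs]; exact he.symm⟩ hfac
      · exact ⟨u, v, x, he, Or.inl ⟨hu, hv⟩⟩
  obtain ⟨u, v, x, rfl, hcond⟩ := hdec
  set L := u.flatMap (Sum.elim s fun b => [b]) with hL
  set R := v.flatMap (Sum.elim s fun b => [b]) with hR
  have hcLMR : c = L ++ s x ++ R := by rw [← hs]; simp [List.flatMap_append]; rfl
  -- x occurs once, so not in u or v
  have hcount := hreg x
  simp only [List.count_append, List.count_cons_self, List.count_nil, Nat.zero_add] at hcount
  have hxu : Sum.inl x ∉ u := List.count_eq_zero.mp (by omega)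
  have hxv : Sum.inl x ∉ v := List.count_eq_zero.mp (by omega)
  -- the replacement word
  refine ⟨Function.update s x ((s x ++ R).dropLast ++ [a] ++ (L ++ s x).tail), ?_⟩
  have h1 : s x ++ R ≠ [] := by
    rcases hcond with ⟨_, hR'⟩ | hm
    · intro h; rcases List.append_eq_nil_iff.mp h with ⟨_, h2⟩; exact hR' h2
    · intro h; exact hm (List.append_eq_nil_iff.mp h).1
  have h2 : L ++ s x ≠ [] := by
    rcases hcond with ⟨hL', _⟩ | hm
    · intro h; exact hL' (List.append_eq_nil_iff.mp h).1
    · intro h; exact hm (List.append_eq_nil_iff.mp h).2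
  rw [List.flatMap_append, List.flatMap_append,
    stmt13_congr s x _ u hxu, stmt13_congr s x _ v hxv]
  simp only [List.flatMap_cons, List.flatMap_nil, Sum.elim_inl, Function.update_self,
    List.append_nil, ← hL, ← hR]
  rw [hcLMR]
  rw [List.append_assoc L (s x) R, List.dropLast_append_of_ne_nil h1]
  rw [← List.append_assoc L (s x) R, List.tail_append_of_ne_nil h2]
  simp only [List.append_assoc]
end

section
/- Let ℓ ≥ 1 and i₁, …, i_ℓ ≥ 1, and let w = (01)^{i₁} (0²1)^{i₂} ⋯ (0^ℓ 1)^{i_ℓ} be a word over {0,1}. Suppose w = u₀^{n₀} · u₁^{n₁} · ⋯ · u_k^{n_k} where each u_j is a nonempty word over {0,1} and each n_j ≥ 2. Then for every j ∈ {0,…,k} there exist j' ∈ {1,…,ℓ} and i' ∈ {1,…,i_{j'}} such that u_j = (0^{j'} 1)^{i'}. -/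
namespace Stmt15Aux
open List

def blk (a : ℕ) : List (Fin 2) := List.replicate a 0 ++ [1]

def enc (L : List ℕ) : List (Fin 2) := L.flatMap blk

lemma enc_nil : enc [] = [] := rfl

lemma enc_cons (a : ℕ) (L : List ℕ) :
    enc (a :: L) = List.replicate a 0 ++ [1] ++ enc L := by
  simp [enc, blk, List.flatMap_cons]

lemma enc_append (L₁ L₂ : List ℕ) : enc (L₁ ++ L₂) = enc L₁ ++ enc L₂ :=
  List.flatMap_append ..

lemma enc_ne_nil (a : ℕ) (L : List ℕ) : enc (a :: L) ≠ [] := by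
  simp [enc_cons]

/-- Parsing lemma: any split of `enc G` into `P ++ Q` with `Q ≠ []` realigns
with the block structure. -/
lemma parse : ∀ (G : List ℕ) (P Q : List (Fin 2)), enc G = P ++ Q → Q ≠ [] →
    ∃ G₁ g T b, G = G₁ ++ g :: T ∧ b ≤ g ∧
      P = enc G₁ ++ List.replicate (g - b) 0 ∧ Q = enc (b :: T) := by
  intro G
  induction G with
  | nil =>
    intro P Q h hQ
    rw [enc_nil] at h
    exact absurd (List.append_eq_nil_iff.mp h.symm).2 hQ
  | cons g T ih =>
    intro P Q h hQ
    rw [enc_cons] at h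
    by_cases hlen : P.length ≤ g
    · refine ⟨[], g, T, g - P.length, rfl, Nat.sub_le _ _, ?_, ?_⟩
      · have hP : P = List.take P.length (List.replicate g (0:Fin 2) ++ ([1] ++ enc T)) := by
          conv_rhs => rw [← List.append_assoc, h, List.take_append_of_le_length le_rfl,
            List.take_length]
        rw [List.take_append_of_le_length (by simpa using hlen), List.take_replicate] at hP
        rw [enc_nil, List.nil_append, Nat.sub_sub_self hlen]
        rw [Nat.min_eq_left hlen] at hP
        exact hP
      · have hQ' : Q = List.drop P.length (List.replicate g (0:Fin 2) ++ ([1] ++ enc T)) := by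
          conv_rhs => rw [← List.append_assoc, h, List.drop_left]
        rw [List.drop_append_of_le_length (by simpa using hlen), List.drop_replicate] at hQ'
        rw [hQ', enc_cons, List.append_assoc]
    · push_neg at hlen
      set P' := P.drop (g + 1) with hP'
      have hPsplit : P = blk g ++ P' := by
        have h1 : List.take (g+1) P = List.take (g+1) (P ++ Q) :=
          (List.take_append_of_le_length (by omega)).symm
        have h2 : List.take (g+1) (P ++ Q) = blk g := by
          rw [← h]
          have : List.replicate g (0 : Fin 2) ++ [1] ++ enc T = blk g ++ enc T := rfl
          rw [this, List.take_append_of_le_length (by simp [blk]), List.take_of_length_le (by simp [blk])]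
        have := (List.take_append_drop (g+1) P).symm
        rw [h1, h2] at this
        exact this
      have hT : enc T = P' ++ Q := by
        have : blk g ++ enc T = blk g ++ (P' ++ Q) := by
          have hb : List.replicate g (0 : Fin 2) ++ [1] ++ enc T = blk g ++ enc T := rfl
          rw [← hb, h, hPsplit, List.append_assoc]
        exact List.append_cancel_left this
      obtain ⟨G₁, g', T', b, hTeq, hbg, hPeq, hQeq⟩ := ih P' Q hT hQ
      refine ⟨g :: G₁, g', T', b, by rw [hTeq]; rfl, hbg, ?_, hQeq⟩
      rw [hPsplit, hPeq, enc_cons, List.append_assoc]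
      rfl

lemma aux_inj : ∀ (a b : ℕ) (x y : List (Fin 2)),
    List.replicate a (0:Fin 2) ++ 1 :: x = List.replicate b 0 ++ 1 :: y →
    a = b ∧ x = y := by
  intro a
  induction a with
  | zero =>
    intro b x y h
    cases b with
    | zero => simpa using h
    | succ b => simp [List.replicate_succ] at h
  | succ a ih =>
    intro b x y h
    cases b with
    | zero => simp [List.replicate_succ] at h
    | succ b =>
      simp only [List.replicate_succ, List.cons_append, List.cons.injEq] at h
      obtain ⟨hab, hxy⟩ := ih b x y h.2
      exact ⟨by omega, hxy⟩

lemma enc_inj : ∀ (L₁ L₂ : List ℕ), enc L₁ = enc L₂ → L₁ = L₂ := by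
  intro L₁
  induction L₁ with
  | nil =>
    intro L₂ h
    cases L₂ with
    | nil => rfl
    | cons b T => exact absurd h.symm (enc_ne_nil b T)
  | cons a T₁ ih =>
    intro L₂ h
    cases L₂ with
    | nil => exact absurd h (enc_ne_nil a T₁)
    | cons b T₂ =>
      rw [enc_cons, enc_cons, List.append_assoc, List.append_assoc,
        List.singleton_append, List.singleton_append] at h
      obtain ⟨hab, hT⟩ := aux_inj a b _ _ h
      rw [hab, ih T₂ hT]

lemma pow_enc (n : ℕ) (X : List ℕ) :
    (List.replicate n (enc X)).flatten = enc ((List.replicate n X).flatten) := by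
  induction n with
  | zero => rfl
  | succ n ih => simp [List.replicate_succ, enc_append, ih]

lemma flatten_rep (n c : ℕ) (a : ℕ) :
    (List.replicate n (List.replicate c a)).flatten = List.replicate (n * c) a := by
  induction n with
  | zero => simp
  | succ n ih =>
    simp [List.replicate_succ, ih, Nat.succ_mul, ← List.replicate_add, Nat.add_comm]


/-- If a sorted gap list encodes `P ++ u^n` with `n ≥ 2`, then `u` is a power
of a single block and `P` is block-aligned. -/
lemma square_parse (G : List ℕ) (hs : List.Pairwise (· ≤ ·) G) (P u : List (Fin 2)) (n : ℕ)
    (hn : 2 ≤ n) (hu : u ≠ []) (h : enc G = P ++ (List.replicate n u).flatten) :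
    ∃ G₁ a c, 1 ≤ c ∧ u = enc (List.replicate c a) ∧
      G = G₁ ++ List.replicate (n * c) a ∧ P = enc G₁ := by
  obtain ⟨m, rfl⟩ : ∃ m, n = m + 1 := ⟨n - 1, by omega⟩
  have hm : 1 ≤ m := by omega
  have hQne : (List.replicate (m + 1) u).flatten ≠ [] := by
    rw [List.replicate_succ, List.flatten_cons]
    intro hc
    exact hu (List.append_eq_nil_iff.mp hc).1
  obtain ⟨G₁, g, T, b, hG, hbg, hP, hQ⟩ := parse G P _ h hQne
  -- second parse: u is a suffix of enc (b :: T)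
  have hQ2 : enc (b :: T) = (List.replicate m u).flatten ++ u := by
    rw [← hQ, List.replicate_succ', List.flatten_append]
    simp
  obtain ⟨G₁', g', T', a, _, _, _, hueq⟩ := parse (b :: T) _ u hQ2 hu
  set X := a :: T' with hX
  set c := X.length with hc
  have hc1 : 1 ≤ c := by simp [hc, hX]
  have hpow : (List.replicate (m+1) u).flatten = enc ((List.replicate (m+1) X).flatten) := by
    rw [hueq, pow_enc]
  have heq : b :: T = (List.replicate (m+1) X).flatten := by
    apply enc_inj
    rw [← hQ, hpow]
  have heq0 := heq
  rw [List.replicate_succ, List.flatten_cons, hX, List.cons_append] at heq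
  injection heq with hba hT
  set M := (List.replicate m X).flatten with hM
  have haM : a ∈ M := by
    obtain ⟨m', rfl⟩ : ∃ m', m = m' + 1 := ⟨m - 1, by omega⟩
    rw [hM, List.replicate_succ, List.flatten_cons]
    exact List.mem_append_left _ (by simp [hX])
  have hsgT : List.Pairwise (· ≤ ·) (g :: T) :=
    hs.sublist (hG ▸ List.sublist_append_right G₁ _)
  have hga : g ≤ a :=
    List.rel_of_pairwise_cons hsgT (a' := a) (hT ▸ List.mem_append_right _ haM)
  have hag : a = g := le_antisymm (hba ▸ hbg) hga
  have hcons : a :: T = X ++ M := by rw [hT, hX, List.cons_append]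
  have hsXM : List.Pairwise (· ≤ ·) (X ++ M) := by
    rw [← hcons, hag]; exact hsgT
  have hXconst : ∀ x ∈ X, x = a := by
    intro x hx
    have hxa : x ≤ a := (List.pairwise_append.mp hsXM).2.2 x hx a haM
    have hax : a ≤ x := by
      have hxmem : x ∈ a :: T := by
        rw [hcons]; exact List.mem_append_left _ hx
      rcases List.mem_cons.mp hxmem with h' | h'
      · omega
      · exact List.rel_of_pairwise_cons (hag ▸ hsgT) (a' := x) h'
    omega
  have hXrep : X = List.replicate c a := List.eq_replicate_iff.mpr ⟨rfl, hXconst⟩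
  refine ⟨G₁, a, c, hc1, ?_, ?_, ?_⟩
  · rw [hueq, hXrep]
  · rw [hG]
    congr 1
    have : g :: T = (List.replicate (m+1) X).flatten := by rw [← hag, ← hba]; exact heq0
    rw [this, hXrep, flatten_rep]
  · rw [hP]
    have hgb : g - b = 0 := by omega
    simp [hgb]

lemma steps (u : ℕ → List (Fin 2)) (n : ℕ → ℕ) :
    ∀ (m : ℕ) (G : List ℕ), List.Pairwise (· ≤ ·) G →
      (∀ j < m, u j ≠ []) → (∀ j < m, 2 ≤ n j) →
      (enc G = (List.range m).flatMap fun j => (List.replicate (n j) (u j)).flatten) →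
      ∀ j < m, ∃ a c, 1 ≤ c ∧ n j * c ≤ G.count a ∧ u j = enc (List.replicate c a) := by
  intro m
  induction m with
  | zero => intro G _ _ _ _ j hj; omega
  | succ m ih =>
    intro G hs hune hn2 h j hj
    rw [List.range_succ, List.flatMap_append, List.flatMap_cons, List.flatMap_nil,
      List.append_nil] at h
    obtain ⟨G₁, a, c, hc1, hueq, hGeq, hPeq⟩ :=
      square_parse G hs _ (u m) (n m) (hn2 m (by omega)) (hune m (by omega)) h
    have hcount : ∀ v, List.count v G₁ ≤ List.count v G := by
      intro v; rw [hGeq, List.count_append]; omega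
    rcases Nat.lt_or_ge j m with hjm | hjm
    · have hs₁ : List.Pairwise (· ≤ ·) G₁ :=
        hs.sublist (hGeq ▸ List.sublist_append_left G₁ _)
      obtain ⟨a', c', h1, h2, h3⟩ := ih G₁ hs₁ (fun j hj => hune j (by omega))
        (fun j hj => hn2 j (by omega)) hPeq.symm j hjm
      exact ⟨a', c', h1, le_trans h2 (hcount a'), h3⟩
    · have hjm' : j = m := by omega
      subst hjm'
      refine ⟨a, c, hc1, ?_, hueq⟩
      rw [hGeq, List.count_append, List.count_replicate]
      simp
lemma count_G0 (i : ℕ → ℕ) : ∀ (m a : ℕ),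
    (((List.range m).flatMap fun j => List.replicate (i (j+1)) (j+1)).count a)
      = if 1 ≤ a ∧ a ≤ m then i a else 0 := by
  intro m
  induction m with
  | zero => intro a; simp; intro h1 h2; omega
  | succ m ih =>
    intro a
    rw [List.range_succ, List.flatMap_append, List.flatMap_cons, List.flatMap_nil,
      List.append_nil, List.count_append, ih, List.count_replicate]
    rcases eq_or_ne a (m+1) with rfl | hne
    · rw [if_neg (show ¬(1 ≤ m+1 ∧ m+1 ≤ m) by omega),
        if_pos (show ((m+1 : ℕ) == m+1) = true by simp),
        if_pos (show 1 ≤ m+1 ∧ m+1 ≤ m+1 by omega)]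
      simp
    · rw [if_neg (show ¬((m+1 : ℕ) == a) = true by simp [Ne.symm hne])]
      split_ifs with h1 h2 <;> omega
lemma mem_G0 (i : ℕ → ℕ) (m : ℕ) (x : ℕ)
    (hx : x ∈ (List.range m).flatMap fun j => List.replicate (i (j+1)) (j+1)) :
    1 ≤ x ∧ x ≤ m := by
  obtain ⟨j, hj, hx⟩ := List.mem_flatMap.mp hx
  rw [List.eq_of_mem_replicate hx]
  have := List.mem_range.mp hj
  omega
lemma sorted_G0 (i : ℕ → ℕ) : ∀ m : ℕ,
    List.Pairwise (· ≤ ·) ((List.range m).flatMap fun j => List.replicate (i (j+1)) (j+1)) := by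
  intro m
  induction m with
  | zero => simp
  | succ m ih =>
    rw [List.range_succ, List.flatMap_append, List.flatMap_cons, List.flatMap_nil,
      List.append_nil]
    refine List.pairwise_append.mpr ⟨ih, ?_, ?_⟩
    · exact List.pairwise_replicate.mpr (Or.inr le_rfl)
    · intro x hx y hy
      have h1 := mem_G0 i m x hx
      have h2 := List.eq_of_mem_replicate hy
      omega

lemma enc_replicate (m v : ℕ) :
    enc (List.replicate m v) = (List.replicate m (blk v)).flatten := by
  induction m with
  | zero => rfl
  | succ m ih =>
    rw [List.replicate_succ, List.replicate_succ, List.flatten_cons, ← ih]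
    rfl

lemma enc_flatMap (L : List ℕ) (f : ℕ → List ℕ) :
    enc (L.flatMap f) = L.flatMap fun x => enc (f x) := by
  induction L with
  | nil => rfl
  | cons a T ih => rw [List.flatMap_cons, List.flatMap_cons, enc_append, ih]

end Stmt15Aux

open Stmt15Aux in
/-- If `w = (01)^{i₁}(0²1)^{i₂}⋯(0^ℓ1)^{i_ℓ}` equals `u₀^{n₀}⋯u_k^{n_k}` with each `u_j`
nonempty and each `n_j ≥ 2`, then each `u_j` has the form `(0^{j'}1)^{i'}` with
`1 ≤ j' ≤ ℓ` and `1 ≤ i' ≤ i_{j'}`. -/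
theorem stmt15 (ℓ : ℕ) (hℓ : 1 ≤ ℓ) (i : ℕ → ℕ) (hi : ∀ j, 1 ≤ j → j ≤ ℓ → 1 ≤ i j)
    (k : ℕ) (u : ℕ → List (Fin 2)) (n : ℕ → ℕ)
    (hu : ∀ j ≤ k, u j ≠ []) (hn : ∀ j ≤ k, 2 ≤ n j)
    (hw : ((List.range ℓ).flatMap fun j =>
        (List.replicate (i (j + 1)) (List.replicate (j + 1) (0 : Fin 2) ++ [1])).flatten) =
      ((List.range (k + 1)).flatMap fun j => (List.replicate (n j) (u j)).flatten)) :
    ∀ j ≤ k, ∃ j', 1 ≤ j' ∧ j' ≤ ℓ ∧ ∃ i', 1 ≤ i' ∧ i' ≤ i j' ∧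
      u j = (List.replicate i' (List.replicate j' (0 : Fin 2) ++ [1])).flatten := by
  intro j hj
  set G₀ := (List.range ℓ).flatMap fun j => List.replicate (i (j+1)) (j+1) with hG₀
  have hwenc : enc G₀ =
      (List.range (k+1)).flatMap fun j => (List.replicate (n j) (u j)).flatten := by
    rw [← hw, hG₀, enc_flatMap]
    simp only [enc_replicate, blk]
  obtain ⟨a, c, hc1, hcount, hueq⟩ := steps u n (k+1) G₀ (sorted_G0 i ℓ)
    (fun j hj => hu j (by omega)) (fun j hj => hn j (by omega)) hwenc j (by omega)
  have hcnt := count_G0 i ℓ a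
  rw [← hG₀] at hcnt
  have hnj : 2 ≤ n j := hn j hj
  have hpos : 2 ≤ List.count a G₀ :=
    le_trans (by calc 2 = 2 * 1 := rfl
                    _ ≤ n j * c := Nat.mul_le_mul hnj hc1) hcount
  have haℓ : 1 ≤ a ∧ a ≤ ℓ := by
    by_contra hcon
    rw [if_neg hcon] at hcnt
    omega
  have hia : List.count a G₀ = i a := by rw [hcnt, if_pos haℓ]
  refine ⟨a, haℓ.1, haℓ.2, c, hc1, ?_, ?_⟩
  · have hle : c ≤ n j * c := Nat.le_mul_of_pos_left c (by omega)
    omega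
  · rw [hueq, enc_replicate]
    rfl
end
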